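/- Let p be a prime, q a positive integer divisible by p, and l an integer. Define G̃ : ℂ → ℂ by G̃(s) := Σ_{(a,b)} e(a·l/q) · expZeta(b·p/q, s), the sum running over all pairs (a,b) with 1 ≤ a,b ≤ q and a·b ≡ 1 (mod q), where b·p/q is taken in ℝ/ℤ. For each integer n ≥ 1 and each sign ±, set f_±(n) := Σ_{b} e(l·b̄/q), the sum over all b ∈ {1,…,q} with gcd(b,q) = 1 and b ≡ ±n (mod q/p), where b̄ ∈ {1,…,q} is the inverse of b modulo q. Then for every z ∈ ℂ with Re z < 0 one has G̃(z) = Γ(1−z) · (2πp/q)^{z−1} · [ e((1−z)/4) · Σ_{n=1}^∞ f_+(n) · n^{z−1} + e(−(1−z)/4) · Σ_{n=1}^∞ f_−(n) · n^{z−1} ], both series on the right converging absolutely. -/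

import Mathlib

open Complex

/-- `e(z) = exp(2πiz)`. -/
noncomputable def eC (z : ℂ) : ℂ := Complex.exp (2 * Real.pi * Complex.I * z)

/-- The Kloosterman sum `Kl(m,n;c) = Σ_{x mod c, (x,c)=1} e((mx + nx*)/c)`,
where `x*` is the inverse of `x` modulo `c`. -/
noncomputable def Kl (m n : ℤ) (c : ℕ) : ℂ :=
  ∑ x ∈ Finset.filter (fun x => Nat.gcd x c = 1) (Finset.Icc 1 c),
    eC ((((m * x + n * ((((x : ZMod c))⁻¹.val : ℕ) : ℤ) : ℤ) : ℝ) / c : ℝ))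

/-- `G̃(s) = Σ_{1 ≤ a,b ≤ q, ab ≡ 1 (q)} e(al/q) expZeta(bp/q, s)`. -/
noncomputable def Gt (p q : ℕ) (l : ℤ) (s : ℂ) : ℂ :=
  ∑ a ∈ Finset.Icc 1 q, ∑ b ∈ Finset.Icc 1 q,
    if (a * b) % q = 1 % q then
      eC ((((a : ℤ) * l : ℤ) : ℝ) / q) *
        HurwitzZeta.expZeta ((((b * p : ℕ) : ℝ) / q : ℝ) : UnitAddCircle) s
    else 0

/-- `f_ε(n) = Σ_{1 ≤ b ≤ q, (b,q)=1, b ≡ εn mod q/p} e(l b̄ / q)`,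
where `b̄` is the inverse of `b` modulo `q`. -/
noncomputable def fpm (p q : ℕ) (l ε : ℤ) (n : ℕ) : ℂ :=
  ∑ b ∈ Finset.filter
      (fun b => Nat.gcd b q = 1 ∧ (b : ℤ) % ((q / p : ℕ) : ℤ) = (ε * n) % ((q / p : ℕ) : ℤ))
      (Finset.Icc 1 q),
    eC (((l * ((((b : ZMod q))⁻¹.val : ℕ) : ℤ) : ℤ) : ℝ) / q)

/-!
Write `c = q / p`. Collapsing the sum over `a` turns `G̃(s)` into `∑ e(l b̄ / q) expZeta(b / c, s)`
over the units `b` modulo `q`. For `Re z < 0` the functional equation of `expZeta` expresses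
`expZeta(b / c, z)` through the Hurwitz zeta values `ζ(± b / c, 1 - z)`, which lie in the range of
absolute convergence, where `c ^ (z - 1) ζ(± b / c, 1 - z)` is the Dirichlet series `∑ n ^ (z - 1)`
over `n ≡ ± b (mod c)`. Regrouping the terms by `n` produces the coefficients `f_±(n)`.
-/

open HurwitzZeta ZMod Finset
open scoped Real

lemma eC_intCast_div (q : ℕ) [NeZero q] (m : ℤ) :
    eC (((m : ℝ) : ℂ) / q) = stdAddChar (m : ZMod q) := by
  rw [eC, stdAddChar_coe]
  push_cast
  ring_nf

lemma sum_Icc_one_natCast {M : Type*} [AddCommMonoid M] (q : ℕ) [NeZero q] (F : ZMod q → M) :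
    ∑ a ∈ Icc 1 q, F a = ∑ x, F x := by
  have hq := NeZero.pos q
  refine sum_nbij' (fun a => (a : ZMod q)) (fun x => if x = 0 then q else x.val)
    (fun _ _ => mem_univ _) (fun x _ => ?_) (fun a ha => ?_) (fun x _ => ?_) (fun _ _ => rfl)
  · rw [mem_Icc]
    split_ifs with hx
    · exact ⟨hq, le_rfl⟩
    · exact ⟨Nat.pos_of_ne_zero ((val_ne_zero x).mpr hx), (val_lt x).le⟩
  · obtain ⟨ha1, haq⟩ := mem_Icc.mp ha
    rcases haq.lt_or_eq with haq | rfl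
    · have : (a : ZMod q) ≠ 0 := by
        rw [Ne, ZMod.natCast_eq_zero_iff]; exact fun h => (Nat.le_of_dvd ha1 h).not_gt haq
      simp [this, val_natCast, Nat.mod_eq_of_lt haq]
    · rw [if_pos (natCast_self a)]
  · split_ifs with hx
    · simp [hx]
    · simp

lemma sum_ite_mul_natCast_eq_one {M : Type*} [AddCommMonoid M] (q : ℕ) [NeZero q] (b : ℕ)
    (g : ZMod q → M) :
    ∑ x : ZMod q, (if x * b = 1 then g x else 0) = if b.gcd q = 1 then g (b : ZMod q)⁻¹ else 0 := by
  split_ifs with hb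
  · have hu : IsUnit (b : ZMod q) := (isUnit_iff_coprime b q).mpr hb
    have hx (x : ZMod q) : x * b = 1 ↔ x = (b : ZMod q)⁻¹ :=
      ⟨fun h => by rw [← mul_one x, ← mul_inv_of_unit _ hu, ← mul_assoc, h, one_mul],
        fun h => h ▸ inv_mul_of_unit _ hu⟩
    simp only [hx, Fintype.sum_ite_eq']
  · refine sum_eq_zero fun x _ => if_neg fun h => hb ?_
    exact (isUnit_iff_coprime b q).mp (IsUnit.of_mul_eq_one_right x h)

section

variable {N : ℕ} [NeZero N]

lemma LFunction_sum_ite_eq (S : Finset ℕ) (w : ℕ → ℂ) {ε : ZMod N} (hε : ε * ε = 1) (s : ℂ) :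
    LFunction (fun j => ∑ b ∈ S, if (b : ZMod N) = ε * j then w b else 0) s =
      N ^ (-s) * ∑ b ∈ S, w b * hurwitzZeta (toAddCircle (ε * (b : ZMod N))) s := by
  have hb (b : ℕ) (j : ZMod N) : (b : ZMod N) = ε * j ↔ ε * b = j := by
    constructor <;> intro h
    · rw [h, ← mul_assoc, hε, one_mul]
    · rw [← h, ← mul_assoc, hε, one_mul]
  simp only [LFunction, hb, sum_mul, ite_mul, zero_mul]
  rw [sum_comm]
  simp only [Fintype.sum_ite_eq]

lemma hasSum_LFunction_nat_succ (Φ : ZMod N → ℂ) {s : ℂ} (hs : 1 < s.re) :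
    HasSum (fun n : ℕ => Φ (n + 1 : ℕ) * ((n + 1 : ℕ) : ℂ) ^ (-s)) (LFunction Φ s) := by
  have h := (LSeriesSummable_of_one_lt_re Φ hs).LSeriesHasSum
  rw [← LFunction_eq_LSeries Φ hs, LSeriesHasSum, ← hasSum_nat_add_iff' 1] at h
  simpa [LSeries.term_of_ne_zero, div_eq_mul_inv, ← cpow_neg] using h

end

lemma expZeta_eq_of_re_neg (a : UnitAddCircle) {z : ℂ} (hz : z.re < 0) :
    expZeta a z = (2 * π) ^ (z - 1) * Gamma (1 - z) *
      (eC ((1 - z) / 4) * hurwitzZeta a (1 - z) +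
        eC (-(1 - z) / 4) * hurwitzZeta (-a) (1 - z)) := by
  have hz' (n : ℕ) : 1 - z ≠ 1 - n := fun h => by
    have := congrArg re h
    simp only [sub_re, one_re, natCast_re] at this
    linarith [n.cast_nonneg (α := ℝ)]
  have h := expZeta_one_sub a (hz' ·)
  rw [sub_sub_cancel, neg_sub] at h
  rw [h, eC, eC]
  ring_nf

lemma ofReal_div_natCast_cpow_mul {x : ℝ} (hx : 0 ≤ x) {c : ℕ} (hc : c ≠ 0) (s : ℂ) :
    ((x / c : ℝ) : ℂ) ^ s * (c : ℂ) ^ s = (x : ℂ) ^ s := by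
  rw [← ofReal_natCast, ← mul_cpow_ofReal_nonneg (by positivity) c.cast_nonneg, ← ofReal_mul,
    div_mul_cancel₀ x (Nat.cast_ne_zero.mpr hc)]

section

variable (p q : ℕ) (l : ℤ)

lemma Gt_eq_sum [NeZero q] (s : ℂ) :
    Gt p q l s = ∑ b ∈ (Icc 1 q).filter (fun b => b.gcd q = 1),
      stdAddChar ((l : ZMod q) * (b : ZMod q)⁻¹) *
        expZeta ((((b * p : ℕ) : ℝ) / q : ℝ) : UnitAddCircle) s := by
  rw [Gt, sum_comm, sum_filter]
  refine sum_congr rfl fun b _ => ?_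
  have hcond (a : ℕ) : (a * b) % q = 1 % q ↔ (a : ZMod q) * b = 1 := by
    rw [← natCast_eq_natCast_iff', Nat.cast_mul, Nat.cast_one]
  generalize expZeta _ s = T
  simp only [hcond, eC_intCast_div]
  simp only [Int.cast_mul, Int.cast_natCast]
  rw [sum_Icc_one_natCast q (fun x => if x * b = 1 then stdAddChar (x * (l : ZMod q)) * T else 0),
    sum_ite_mul_natCast_eq_one, mul_comm ((b : ZMod q)⁻¹)]

lemma fpm_eq_sum [NeZero q] (ε : ℤ) (n : ℕ) :
    fpm p q l ε n = ∑ b ∈ (Icc 1 q).filter (fun b => b.gcd q = 1),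
      if (b : ZMod (q / p)) = ε * n then stdAddChar ((l : ZMod q) * (b : ZMod q)⁻¹) else 0 := by
  rw [← sum_filter, filter_filter, fpm]
  refine sum_congr (filter_congr fun b _ => ?_) fun b _ => ?_
  · rw [← intCast_eq_intCast_iff']
    push_cast
    rfl
  · rw [eC_intCast_div]
    push_cast
    rw [natCast_zmod_val]

end

lemma natCast_mul_div_eq_toAddCircle {p q : ℕ} (hpq : p ∣ q) [NeZero (q / p)] (b : ℕ) :
    ((((b * p : ℕ) : ℝ) / q : ℝ) : UnitAddCircle) = toAddCircle (b : ZMod (q / p)) := by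
  have hp : (p : ℝ) ≠ 0 := Nat.cast_ne_zero.mpr fun h => NeZero.ne (q / p) (by simp [h])
  rw [toAddCircle_natCast, Nat.cast_div hpq hp]
  push_cast
  field_simp

lemma hasSum_fpm (p q : ℕ) [NeZero q] [NeZero (q / p)] (l : ℤ) {ε : ℤ} (hε : ε * ε = 1)
    {z : ℂ} (hz : z.re < 0) :
    HasSum (fun n : ℕ => fpm p q l ε (n + 1) * ((n + 1 : ℕ) : ℂ) ^ (z - 1))
      (((q / p : ℕ) : ℂ) ^ (z - 1) * ∑ b ∈ (Icc 1 q).filter (fun b => b.gcd q = 1),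
        stdAddChar ((l : ZMod q) * (b : ZMod q)⁻¹) *
          hurwitzZeta (toAddCircle ((ε : ZMod (q / p)) * (b : ZMod (q / p)))) (1 - z)) := by
  have hs : 1 < (1 - z).re := by
    rw [sub_re, one_re]
    linarith
  have hε' : (ε : ZMod (q / p)) * ε = 1 := by rw [← Int.cast_mul, hε, Int.cast_one]
  have h := hasSum_LFunction_nat_succ (fun j => ∑ b ∈ (Icc 1 q).filter (fun b => b.gcd q = 1),
    if (b : ZMod (q / p)) = (ε : ZMod (q / p)) * j then
      stdAddChar ((l : ZMod q) * (b : ZMod q)⁻¹) else 0) hs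
  rw [LFunction_sum_ite_eq _ _ hε', neg_sub] at h
  simpa only [fpm_eq_sum] using h

theorem stmt8_general (p q : ℕ) (hq : 0 < q) (hpq : p ∣ q) (l : ℤ)
    (z : ℂ) (hz : z.re < 0) :
    Summable (fun n : ℕ => ‖fpm p q l 1 (n + 1) * (((n : ℕ) + 1 : ℕ) : ℂ) ^ (z - 1)‖) ∧
    Summable (fun n : ℕ => ‖fpm p q l (-1) (n + 1) * (((n : ℕ) + 1 : ℕ) : ℂ) ^ (z - 1)‖) ∧
    Gt p q l z = Complex.Gamma (1 - z) * (((2 * Real.pi * p / q : ℝ) : ℂ)) ^ (z - 1) *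
      (eC ((1 - z) / 4) * ∑' n : ℕ, fpm p q l 1 (n + 1) * (((n : ℕ) + 1 : ℕ) : ℂ) ^ (z - 1) +
       eC (-(1 - z) / 4) *
        ∑' n : ℕ, fpm p q l (-1) (n + 1) * (((n : ℕ) + 1 : ℕ) : ℂ) ^ (z - 1)) := by
  have hp : 0 < p := Nat.pos_of_dvd_of_pos hpq hq
  have : NeZero q := ⟨hq.ne'⟩
  have : NeZero (q / p) := ⟨(Nat.div_pos (Nat.le_of_dvd hq hpq) hp).ne'⟩
  have hplus := hasSum_fpm p q l (ε := 1) rfl hz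
  have hminus := hasSum_fpm p q l (ε := -1) rfl hz
  refine ⟨summable_norm_iff.mpr hplus.summable, summable_norm_iff.mpr hminus.summable, ?_⟩
  have hscale : ((2 * π * p / q : ℝ) : ℂ) ^ (z - 1) * ((q / p : ℕ) : ℂ) ^ (z - 1) =
      (2 * π) ^ (z - 1) := by
    rw [show 2 * π * p / q = 2 * π / (q / p : ℕ) by
        rw [Nat.cast_div hpq (Nat.cast_ne_zero.mpr hp.ne')]; field_simp,
      ofReal_div_natCast_cpow_mul (by positivity) (NeZero.ne _)]
    push_cast
    rfl
  rw [Gt_eq_sum, hplus.tsum_eq, hminus.tsum_eq]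
  simp only [natCast_mul_div_eq_toAddCircle hpq, expZeta_eq_of_re_neg _ hz, Int.cast_one,
    one_mul, Int.cast_neg, neg_one_mul, map_neg]
  rw [← hscale]
  simp only [mul_sum, ← sum_add_distrib]
  refine sum_congr rfl fun b _ => ?_
  ring

theorem stmt8 (p q : ℕ) (hp : p.Prime) (hq : 0 < q) (hpq : p ∣ q) (l : ℤ)
    (z : ℂ) (hz : z.re < 0) :
    Summable (fun n : ℕ => ‖fpm p q l 1 (n + 1) * (((n : ℕ) + 1 : ℕ) : ℂ) ^ (z - 1)‖) ∧
    Summable (fun n : ℕ => ‖fpm p q l (-1) (n + 1) * (((n : ℕ) + 1 : ℕ) : ℂ) ^ (z - 1)‖) ∧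
    Gt p q l z = Complex.Gamma (1 - z) * (((2 * Real.pi * p / q : ℝ) : ℂ)) ^ (z - 1) *
      (eC ((1 - z) / 4) * ∑' n : ℕ, fpm p q l 1 (n + 1) * (((n : ℕ) + 1 : ℕ) : ℂ) ^ (z - 1) +
       eC (-(1 - z) / 4) *
        ∑' n : ℕ, fpm p q l (-1) (n + 1) * (((n : ℕ) + 1 : ℕ) : ℂ) ^ (z - 1)) :=
  stmt8_general p q hq hpq l z hz
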